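/- Let J₁ = −1/2, J₂ = (1+√2)/2, J₃ = √2/2. For ε ∈ ℝ and (u,v) ∈ ℝ² define w(u,v,ε) := (ε − J₁u − J₂v)/J₃, and set I(ε) := ∫_{u=−1}^{1} ∫_{{v ∈ ℝ : Q(u,v,w(u,v,ε)) > 0}} Q(u, v, w(u,v,ε))^{−1/2} dv du. Then I(ε) is finite and takes the same value for all ε in the interval [0, 1]; i.e., the density of states has a plateau on [0,1]. -/

import Mathlib

/-!
Fix `u`. On the energy plane `w` is affine in `v`, `w = A + B v`, where the slope
`B = -(1 + √2/2)` does not depend on `ε` and the offset is `A = √2 (ε + u/2)`. Restricted to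
such a line, `Q` is a downward parabola `D - k (v - m)²` with `k = 1 + B² - 2uB` and
`k D = (1 - u²)(k - A²)`. The substitution `v = m + √(D/k) sin θ` shows that
`∫_{Q > 0} Q^{-1/2} dv = π / √k` as soon as `D > 0`, whatever `D` and `m` are. For
`ε ∈ [0,1]` and `u ∈ (-1,1)` one checks `A² < k`, so the inner integral is `π / √k(u)`,
independent of `ε`, and continuous in `u ∈ [-1,1]`.
-/

open MeasureTheory

/-- `Q(u,v,w) = 1 − u² − v² − w² + 2uvw`. -/
def Qfun (u v w : ℝ) : ℝ := 1 - u ^ 2 - v ^ 2 - w ^ 2 + 2 * u * v * w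

/-- For the standard couplings `J₁ = −1/2`, `J₂ = (1+√2)/2`, `J₃ = √2/2`, the value of `w`
on the energy plane `J₁u + J₂v + J₃w = ε`. -/
noncomputable def wPlane (u v ε : ℝ) : ℝ :=
  (ε - (-1 / 2) * u - ((1 + Real.sqrt 2) / 2) * v) / (Real.sqrt 2 / 2)

/-- The (unnormalized) density of states at energy `ε`:
`I(ε) = ∫_{u=−1}^{1} ∫_{{v : Q(u,v,w(u,v,ε)) > 0}} Q(u,v,w(u,v,ε))^{−1/2} dv du`. -/
noncomputable def dosIntegral (ε : ℝ) : ℝ :=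
  ∫ u in Set.Icc (-1 : ℝ) 1,
    ∫ v in {v : ℝ | 0 < Qfun u v (wPlane u v ε)}, 1 / Real.sqrt (Qfun u v (wPlane u v ε))

open Real Set

section Chord

variable {k D : ℝ} (m : ℝ)

lemma mul_sq_sqrt_div (hk : 0 < k) (hD : 0 ≤ D) : k * √(D / k) ^ 2 = D := by
  rw [sq_sqrt (div_nonneg hD hk.le)]
  field_simp

lemma injOn_affine_sin {r : ℝ} (hr : r ≠ 0) :
    InjOn (fun θ => m + r * sin θ) (Ioo (-(π / 2)) (π / 2)) :=
  fun _ hx _ hy hxy => injOn_sin (Ioo_subset_Icc_self hx) (Ioo_subset_Icc_self hy)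
    (mul_left_cancel₀ hr (add_left_cancel hxy))

lemma setOf_pos_sub_mul_sq_eq_image_sin (hk : 0 < k) (hD : 0 < D) :
    {v | 0 < D - k * (v - m) ^ 2} =
      (fun θ => m + √(D / k) * sin θ) '' Ioo (-(π / 2)) (π / 2) := by
  set r := √(D / k)
  have hr : 0 < r := sqrt_pos.2 (div_pos hD hk)
  have hkr : k * r ^ 2 = D := mul_sq_sqrt_div hk hD.le
  have hsin : sin '' Ioo (-(π / 2)) (π / 2) = Ioo (-1) 1 :=
    sinPartialHomeomorph.image_source_eq_target
  rw [← image_image (fun x => m + r * x) sin, hsin]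
  ext v
  simp only [mem_ofPred_eq, mem_image, mem_Ioo]
  constructor
  · intro hv
    have hx : ((v - m) / r) ^ 2 < 1 := by
      rw [div_pow, div_lt_one (by positivity)]
      nlinarith
    refine ⟨(v - m) / r, abs_lt.1 ((sq_lt_one_iff_abs_lt_one _).1 hx), ?_⟩
    field_simp
    ring
  · rintro ⟨x, hx, rfl⟩
    have hx2 : x ^ 2 < 1 := (sq_lt_one_iff_abs_lt_one x).2 (abs_lt.2 hx)
    have : D - k * (m + r * x - m) ^ 2 = D * (1 - x ^ 2) := by
      linear_combination (-x ^ 2) * hkr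
    rw [this]
    exact mul_pos hD (by linarith)

lemma abs_deriv_smul_one_div_sqrt_sub_mul_sq_affine_sin (hk : 0 < k) (hD : 0 < D) :
    EqOn (fun θ => |√(D / k) * cos θ| • (1 / √(D - k * (m + √(D / k) * sin θ - m) ^ 2)))
      (fun _ => 1 / √k) (Ioo (-(π / 2)) (π / 2)) := by
  intro θ hθ
  have hcos : 0 < cos θ := cos_pos_of_mem_Ioo hθ
  have hQ : D - k * (m + √(D / k) * sin θ - m) ^ 2 = D * cos θ ^ 2 := by
    linear_combination (-sin θ ^ 2) * mul_sq_sqrt_div hk hD.le - D * sin_sq_add_cos_sq θ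
  simp only [hQ, smul_eq_mul]
  rw [sqrt_mul hD.le, sqrt_sq hcos.le, abs_of_pos (mul_pos (sqrt_pos.2 (div_pos hD hk)) hcos),
    sqrt_div hD.le]
  field_simp

lemma integrableOn_one_div_sqrt_sub_mul_sq (hk : 0 < k) :
    IntegrableOn (fun v => 1 / √(D - k * (v - m) ^ 2)) {v | 0 < D - k * (v - m) ^ 2} := by
  rcases le_or_gt D 0 with hD | hD
  · convert integrableOn_empty
    ext v
    simp only [mem_ofPred_eq, mem_empty_iff_false, iff_false, not_lt]
    nlinarith [mul_nonneg hk.le (sq_nonneg (v - m))]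
  rw [setOf_pos_sub_mul_sq_eq_image_sin m hk hD,
    integrableOn_image_iff_integrableOn_abs_deriv_smul measurableSet_Ioo
      (fun θ _ => (((hasDerivAt_sin θ).const_mul _).const_add m).hasDerivWithinAt)
      (injOn_affine_sin m (sqrt_pos.2 (div_pos hD hk)).ne')]
  exact (integrableOn_const measure_Ioo_lt_top.ne).congr_fun
    (abs_deriv_smul_one_div_sqrt_sub_mul_sq_affine_sin m hk hD).symm measurableSet_Ioo

lemma integral_one_div_sqrt_sub_mul_sq (hk : 0 < k) (hD : 0 < D) :
    ∫ v in {v | 0 < D - k * (v - m) ^ 2}, 1 / √(D - k * (v - m) ^ 2) = π / √k := by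
  rw [setOf_pos_sub_mul_sq_eq_image_sin m hk hD,
    integral_image_eq_integral_abs_deriv_smul measurableSet_Ioo
      (fun θ _ => (((hasDerivAt_sin θ).const_mul _).const_add m).hasDerivWithinAt)
      (injOn_affine_sin m (sqrt_pos.2 (div_pos hD hk)).ne'),
    setIntegral_congr_fun measurableSet_Ioo
      (abs_deriv_smul_one_div_sqrt_sub_mul_sq_affine_sin m hk hD),
    setIntegral_const, volume_real_Ioo_of_le (by linarith [pi_pos]), smul_eq_mul]
  ring

end Chord

section Line

variable {u B : ℝ}

def lineCurv (u B : ℝ) : ℝ := 1 + B ^ 2 - 2 * u * B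

lemma Qfun_line (A v : ℝ) (hk : lineCurv u B ≠ 0) :
    Qfun u v (A + B * v) = (1 - u ^ 2) * (lineCurv u B - A ^ 2) / lineCurv u B
      - lineCurv u B * (v - A * (u - B) / lineCurv u B) ^ 2 := by
  field_simp
  unfold Qfun lineCurv
  ring

lemma integrableOn_one_div_sqrt_Qfun_line (A : ℝ) (hk : 0 < lineCurv u B) :
    IntegrableOn (fun v => 1 / √(Qfun u v (A + B * v))) {v | 0 < Qfun u v (A + B * v)} := by
  simp_rw [Qfun_line A _ hk.ne']
  exact integrableOn_one_div_sqrt_sub_mul_sq _ hk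

lemma integral_one_div_sqrt_Qfun_line {A : ℝ} (hu : u ∈ Ioo (-1) 1)
    (hA : A ^ 2 < lineCurv u B) :
    ∫ v in {v | 0 < Qfun u v (A + B * v)}, 1 / √(Qfun u v (A + B * v)) =
      π / √(lineCurv u B) := by
  have hk : 0 < lineCurv u B := (sq_nonneg A).trans_lt hA
  simp_rw [Qfun_line A _ hk.ne']
  refine integral_one_div_sqrt_sub_mul_sq _ hk (div_pos (mul_pos ?_ (sub_pos.2 hA)) hk)
  nlinarith [hu.1, hu.2]

end Line

noncomputable def planeSlope : ℝ := -(1 + √2 / 2)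

noncomputable def planeOffset (u ε : ℝ) : ℝ := √2 * (ε + u / 2)

lemma wPlane_eq (u v ε : ℝ) : wPlane u v ε = planeOffset u ε + planeSlope * v := by
  have hs : √2 ^ 2 = 2 := sq_sqrt zero_le_two
  unfold wPlane planeOffset planeSlope
  field_simp
  linear_combination (-2 * ε - u + v) * hs

lemma lineCurv_planeSlope (u : ℝ) :
    lineCurv u planeSlope = (5 + 2 * √2) / 2 + (2 + √2) * u := by
  have hs : √2 ^ 2 = 2 := sq_sqrt zero_le_two
  unfold lineCurv planeSlope
  linear_combination hs / 4

lemma lineCurv_planeSlope_pos {u : ℝ} (hu : -1 ≤ u) : 0 < lineCurv u planeSlope := by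
  rw [lineCurv_planeSlope]
  nlinarith [one_lt_sqrt_two]

lemma planeOffset_sq_lt {u ε : ℝ} (hu : u ∈ Ioo (-1) 1) (hε : ε ∈ Icc 0 1) :
    planeOffset u ε ^ 2 < lineCurv u planeSlope := by
  have hs : √2 ^ 2 = 2 := sq_sqrt zero_le_two
  rw [lineCurv_planeSlope, planeOffset, mul_pow, hs]
  obtain ⟨hu1, hu2⟩ := hu
  obtain ⟨he1, he2⟩ := hε
  nlinarith [one_lt_sqrt_two, mul_pos (sub_pos.2 hu2) (neg_lt_iff_pos_add'.1 hu1),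
    mul_nonneg (mul_nonneg (sub_nonneg.2 hu2.le) he1) (sub_nonneg.2 he2)]

lemma integrableOn_one_div_sqrt_Qfun_wPlane {u : ℝ} (hu : -1 ≤ u) (ε : ℝ) :
    IntegrableOn (fun v => 1 / √(Qfun u v (wPlane u v ε)))
      {v | 0 < Qfun u v (wPlane u v ε)} := by
  simp_rw [wPlane_eq]
  exact integrableOn_one_div_sqrt_Qfun_line _ (lineCurv_planeSlope_pos hu)

lemma integral_one_div_sqrt_Qfun_wPlane {u ε : ℝ} (hu : u ∈ Ioo (-1) 1)
    (hε : ε ∈ Icc 0 1) :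
    ∫ v in {v | 0 < Qfun u v (wPlane u v ε)}, 1 / √(Qfun u v (wPlane u v ε)) =
      π / √(lineCurv u planeSlope) := by
  simp_rw [wPlane_eq]
  exact integral_one_div_sqrt_Qfun_line hu (planeOffset_sq_lt hu hε)

lemma integrableOn_pi_div_sqrt_lineCurv_planeSlope :
    IntegrableOn (fun u => π / √(lineCurv u planeSlope)) (Ioo (-1) 1) := by
  refine (ContinuousOn.integrableOn_Icc ?_).mono_set Ioo_subset_Icc_self
  exact continuousOn_const.div (by unfold lineCurv; fun_prop)
    fun u hu => (sqrt_pos.2 (lineCurv_planeSlope_pos hu.1)).ne'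

lemma dosIntegral_eq {ε : ℝ} (hε : ε ∈ Icc 0 1) :
    dosIntegral ε = ∫ u in Ioo (-1) 1, π / √(lineCurv u planeSlope) := by
  rw [dosIntegral, integral_Icc_eq_integral_Ioo]
  exact setIntegral_congr_fun measurableSet_Ioo fun u hu => integral_one_div_sqrt_Qfun_wPlane hu hε

/-- for the standard couplings, `I(ε)` is finite (the inner and outer integrands
are integrable) and takes the same value for all `ε ∈ [0,1]`: the density of states has a
plateau on `[0,1]`. -/
theorem dos_plateau :
    (∀ ε ∈ Set.Icc (0 : ℝ) 1,
      (∀ u ∈ Set.Icc (-1 : ℝ) 1,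
        IntegrableOn (fun v => 1 / Real.sqrt (Qfun u v (wPlane u v ε)))
          {v : ℝ | 0 < Qfun u v (wPlane u v ε)}) ∧
      IntegrableOn
        (fun u => ∫ v in {v : ℝ | 0 < Qfun u v (wPlane u v ε)},
          1 / Real.sqrt (Qfun u v (wPlane u v ε)))
        (Set.Icc (-1 : ℝ) 1)) ∧
    (∀ ε₁ ∈ Set.Icc (0 : ℝ) 1, ∀ ε₂ ∈ Set.Icc (0 : ℝ) 1,
      dosIntegral ε₁ = dosIntegral ε₂) := by
  refine ⟨fun ε hε => ⟨fun u hu => integrableOn_one_div_sqrt_Qfun_wPlane hu.1 ε, ?_⟩,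
    fun ε₁ h₁ ε₂ h₂ => by rw [dosIntegral_eq h₁, dosIntegral_eq h₂]⟩
  rw [integrableOn_Icc_iff_integrableOn_Ioo]
  exact integrableOn_pi_div_sqrt_lineCurv_planeSlope.congr_fun
    (fun u hu => (integral_one_div_sqrt_Qfun_wPlane hu hε).symm) measurableSet_Ioo
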